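/- arXiv:1110.5798 — 2 statements merged into one kernel-verified Lean document; each statement's English description precedes it below -/
import Mathlib

section
/- Explicit moderately steep scales. For every real beta >= 8, the sequences Gamma_k := e^{(beta+1)(3/2)^k} and gamma_k := (1/8) e^{beta (3/2)^{k+1}}, k >= 1, are moderately steep scales; that is, they are strictly increasing and satisfy: (1) Gamma_1 >= 2 and Gamma_k < gamma_k/2 for all k >= 1; (2) with theta_k := sum_{h=1}^k (Gamma_h + gamma_h), one has inf over k >= 1 of Gamma_{k+1}/theta_k >= 5; (3) sum over k >= 1 of Gamma_k/gamma_k <= 1/2; (4) a_0 := sum over k >= 0 of 2^{-k} log( [2(Gamma_{k+1}+gamma_{k+1})+1]^2 ) < infinity; (5) for every a > 0, sum over k >= 1 of [2(theta_k+Gamma_k)+1]^2 e^{-a 2^{k-1}} < infinity. -/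
open Real

/-- `θ_k := ∑_{h=1}^k (Γ_h + γ_h)`. -/
noncomputable def thetaSeq (Γ γ : ℕ → ℝ) (k : ℕ) : ℝ := ∑ h ∈ Finset.Icc 1 k, (Γ h + γ h)

/-- The scale `Γ_k := e^{(β+1)(3/2)^k}`. -/
noncomputable def GamSeq (β : ℝ) (k : ℕ) : ℝ := Real.exp ((β + 1) * (3 / 2) ^ k)

/-- The scale `γ_k := (1/8) e^{β(3/2)^{k+1}}`. -/
noncomputable def gamSeq (β : ℝ) (k : ℕ) : ℝ := (1 / 8) * Real.exp (β * (3 / 2) ^ (k + 1))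

/-! With `t = (3/2)^k` one has `log Γ_k = (β+1) t` and `log (8 γ_k) = (3/2) β t`, so every
condition is a comparison of exponents. The exponent gap `(β/2 - 1) t` makes `Γ_k/γ_k`
doubly-exponentially small; `Γ_{k+1} = 8 e^{(3/2)^{k+1}} γ_k ≥ 16 γ_k`; `γ` at least doubles at each
step, so `θ_k ≤ 3 γ_k`. Hence every quantity in (4) and (5) is at most `8 γ_k = e^{β (3/2)^{k+1}}`,
whose logarithm is beaten by `2^k`, geometrically in (4) and doubly exponentially in (5). -/

lemma mul_exp_lt_exp {c A B : ℝ} (hc : 0 < c) (h : log c < B - A) : c * exp A < exp B := by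
  rw [← exp_log hc, ← exp_add]
  exact exp_lt_exp.2 (by linarith)

lemma summable_exp_neg_mul_two_pow {a : ℝ} (ha : 0 < a) :
    Summable fun k : ℕ => exp (-(a * 2 ^ k)) := by
  refine Summable.of_nonneg_of_le (fun k => (exp_pos _).le) (fun k => ?_)
    (summable_geometric_of_lt_one (exp_pos (-a)).le (exp_lt_one_iff.2 (by linarith)))
  have hk : (k : ℝ) ≤ 2 ^ k := by exact_mod_cast Nat.lt_two_pow_self.le
  rw [← exp_nat_mul]
  exact exp_le_exp.2 (by nlinarith)

lemma summable_exp_mul_pow_sub_mul_two_pow {p : ℝ} (hp : 0 ≤ p) (hp2 : p < 2) (C : ℝ) {a : ℝ}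
    (ha : 0 < a) : Summable fun k : ℕ => exp (C * p ^ k - a * 2 ^ k) := by
  have hsmall : ∀ᶠ k : ℕ in Filter.atTop, C * (p / 2) ^ k < a / 2 :=
    ((tendsto_pow_atTop_nhds_zero_of_lt_one (by positivity) (by linarith)).const_mul C).eventually
      (gt_mem_nhds (by simpa using half_pos ha))
  refine (summable_exp_neg_mul_two_pow (half_pos ha)).of_norm_bounded_eventually_nat ?_
  filter_upwards [hsmall] with k hk
  have hsplit : C * p ^ k = C * (p / 2) ^ k * 2 ^ k := by rw [div_pow]; field_simp
  rw [Real.norm_eq_abs, abs_of_pos (exp_pos _)]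
  exact exp_le_exp.2 (by nlinarith [pow_pos (two_pos (α := ℝ)) k])

lemma one_add_mul_half_le_three_halves_pow (k : ℕ) : 1 + k / 2 ≤ (3 / 2 : ℝ) ^ k := by
  have := one_add_mul_le_pow (show (-2 : ℝ) ≤ 1 / 2 by norm_num) k
  norm_num at this ⊢
  linarith

lemma sum_Icc_one_le_two_mul {f : ℕ → ℝ} (h0 : 0 ≤ f 0) (hf : ∀ n, 2 * f n ≤ f (n + 1)) (k : ℕ) :
    ∑ h ∈ Finset.Icc 1 k, f h ≤ 2 * f k := by
  induction k with
  | zero => simpa using h0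
  | succ k ih =>
    rw [Finset.sum_Icc_succ_top (by omega)]
    linarith [hf k]

lemma GamSeq_pos (β : ℝ) (k : ℕ) : 0 < GamSeq β k := exp_pos _

lemma gamSeq_pos (β : ℝ) (k : ℕ) : 0 < gamSeq β k := by
  unfold gamSeq; positivity

lemma sixteen_mul_gamSeq_le_GamSeq_succ (β : ℝ) (k : ℕ) : 16 * gamSeq β k ≤ GamSeq β (k + 1) := by
  have hexp : 2 ≤ exp ((3 / 2) ^ (k + 1)) := by
    have hq : (1 : ℝ) ≤ (3 / 2) ^ (k + 1) := one_le_pow₀ (by norm_num)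
    linarith [add_one_le_exp ((3 / 2 : ℝ) ^ (k + 1))]
  have hsplit : GamSeq β (k + 1) = exp ((3 / 2) ^ (k + 1)) * exp (β * (3 / 2) ^ (k + 1)) := by
    rw [GamSeq, ← exp_add]; ring_nf
  rw [hsplit, gamSeq]
  nlinarith [exp_pos (β * (3 / 2) ^ (k + 1))]

section Scales

variable {β : ℝ}

lemma GamSeq_lt_GamSeq_succ (hβ : -1 < β) (k : ℕ) : GamSeq β k < GamSeq β (k + 1) := by
  unfold GamSeq
  refine exp_lt_exp.2 (mul_lt_mul_of_pos_left ?_ (by linarith))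
  exact pow_lt_pow_right₀ (by norm_num) k.lt_succ_self

lemma two_le_GamSeq_one (hβ : 0 ≤ β) : 2 ≤ GamSeq β 1 := by
  unfold GamSeq
  linarith [add_one_le_exp ((β + 1) * (3 / 2) ^ 1)]

lemma two_mul_gamSeq_le_gamSeq_succ (hβ : 1 ≤ β) (k : ℕ) :
    2 * gamSeq β k ≤ gamSeq β (k + 1) := by
  have hq : (3 / 2 : ℝ) ≤ (3 / 2) ^ (k + 1) := le_self_pow₀ (by norm_num) (by omega)
  have h := mul_exp_lt_exp (A := β * (3 / 2) ^ (k + 1)) (B := β * (3 / 2) ^ (k + 1 + 1))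
    two_pos (by rw [pow_succ _ (k + 1)]; nlinarith [log_two_lt_d9])
  unfold gamSeq
  linarith

lemma one_le_gamSeq (hβ : 2 ≤ β) (k : ℕ) : 1 ≤ gamSeq β k := by
  have hq : (3 / 2 : ℝ) ≤ (3 / 2) ^ (k + 1) := le_self_pow₀ (by norm_num) (by omega)
  have hlog8 : log 8 = 3 * log 2 := by
    rw [show (8 : ℝ) = 2 ^ 3 by norm_num, log_pow]; norm_num
  have h := mul_exp_lt_exp (A := 0) (B := β * (3 / 2) ^ (k + 1)) (c := 8) (by norm_num)
    (by rw [hlog8]; nlinarith [log_two_lt_d9])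
  rw [exp_zero] at h
  unfold gamSeq
  linarith

lemma GamSeq_lt_gamSeq_div_two (hβ : 6 ≤ β) {k : ℕ} (hk : 1 ≤ k) :
    GamSeq β k < gamSeq β k / 2 := by
  have hq : (3 / 2 : ℝ) ≤ (3 / 2) ^ k := le_self_pow₀ (by norm_num) (by omega)
  have hlog16 : log 16 = 4 * log 2 := by
    rw [show (16 : ℝ) = 2 ^ 4 by norm_num, log_pow]; norm_num
  have h := mul_exp_lt_exp (A := (β + 1) * (3 / 2) ^ k) (B := β * (3 / 2) ^ (k + 1))
    (c := 16) (by norm_num) (by rw [hlog16, pow_succ]; nlinarith [log_two_lt_d9])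
  unfold GamSeq gamSeq
  linarith

lemma gamSeq_le_thetaSeq {k : ℕ} (hk : 1 ≤ k) :
    gamSeq β k ≤ thetaSeq (GamSeq β) (gamSeq β) k := by
  calc gamSeq β k ≤ GamSeq β k + gamSeq β k := le_add_of_nonneg_left (GamSeq_pos β k).le
    _ ≤ thetaSeq (GamSeq β) (gamSeq β) k :=
      Finset.single_le_sum (f := fun h => GamSeq β h + gamSeq β h)
        (fun h _ => (add_pos (GamSeq_pos β h) (gamSeq_pos β h)).le)
        (Finset.mem_Icc.2 ⟨hk, le_rfl⟩)

lemma thetaSeq_le_three_mul_gamSeq (hβ : 6 ≤ β) (k : ℕ) :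
    thetaSeq (GamSeq β) (gamSeq β) k ≤ 3 * gamSeq β k := by
  calc thetaSeq (GamSeq β) (gamSeq β) k ≤ ∑ h ∈ Finset.Icc 1 k, 3 / 2 * gamSeq β h :=
        Finset.sum_le_sum fun h hh => by
          linarith [GamSeq_lt_gamSeq_div_two hβ (Finset.mem_Icc.1 hh).1]
    _ = 3 / 2 * ∑ h ∈ Finset.Icc 1 k, gamSeq β h := by rw [Finset.mul_sum]
    _ ≤ 3 / 2 * (2 * gamSeq β k) := by
        gcongr
        exact sum_Icc_one_le_two_mul (gamSeq_pos β 0).le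
          (two_mul_gamSeq_le_gamSeq_succ (by linarith)) k
    _ = 3 * gamSeq β k := by ring

lemma two_mul_thetaSeq_add_GamSeq_add_one_le (hβ : 6 ≤ β) {k : ℕ} (hk : 1 ≤ k) :
    2 * (thetaSeq (GamSeq β) (gamSeq β) k + GamSeq β k) + 1 ≤ exp (β * (3 / 2) ^ (k + 1)) := by
  have h8 : exp (β * (3 / 2) ^ (k + 1)) = 8 * gamSeq β k := by unfold gamSeq; ring
  linarith [thetaSeq_le_three_mul_gamSeq hβ k, GamSeq_lt_gamSeq_div_two hβ hk,
    one_le_gamSeq (β := β) (by linarith) k]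

lemma GamSeq_div_gamSeq_succ_le (hβ : 8 ≤ β) (k : ℕ) :
    GamSeq β (k + 1) / gamSeq β (k + 1) ≤ 1 / 8 * (1 / 2) ^ k := by
  have hq := one_add_mul_half_le_three_halves_pow (k + 1)
  have hlog : log (2 ^ (k + 6)) = (k + 6) * log 2 := by rw [log_pow]; push_cast; ring
  have hβq := mul_le_mul_of_nonneg_right hβ (pow_nonneg (by norm_num : (0 : ℝ) ≤ 3 / 2) (k + 1))
  -- `2 ^ (k + 6) = 64 * 2 ^ k`, and the exponent gap `(β/2 - 1) (3/2)^(k+1) ≥ 3 (1 + (k+1)/2)`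
  -- beats `(k + 6) log 2`.
  have h := mul_exp_lt_exp (A := (β + 1) * (3 / 2) ^ (k + 1)) (B := β * (3 / 2) ^ (k + 1 + 1))
    (c := 2 ^ (k + 6)) (by positivity) (by
      rw [hlog, pow_succ _ (k + 1)]; push_cast at hq
      nlinarith [log_two_lt_d9])
  rw [pow_add] at h
  rw [div_le_iff₀ (gamSeq_pos _ _), one_div_pow, GamSeq, gamSeq]
  set eA := exp ((β + 1) * (3 / 2) ^ (k + 1))
  set eB := exp (β * (3 / 2) ^ (k + 1 + 1))
  field_simp
  linarith

lemma sq_two_mul_thetaSeq_add_GamSeq_add_one_le (hβ : 6 ≤ β) {k : ℕ} (hk : 1 ≤ k) :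
    (2 * (thetaSeq (GamSeq β) (gamSeq β) k + GamSeq β k) + 1) ^ 2 ≤
      exp (2 * β * (3 / 2) ^ (k + 1)) := by
  have hθ := gamSeq_le_thetaSeq (β := β) hk
  calc (2 * (thetaSeq (GamSeq β) (gamSeq β) k + GamSeq β k) + 1) ^ 2
      ≤ exp (β * (3 / 2) ^ (k + 1)) ^ 2 :=
        pow_le_pow_left₀ (by linarith [gamSeq_pos β k, GamSeq_pos β k])
          (two_mul_thetaSeq_add_GamSeq_add_one_le hβ hk) 2
    _ = exp (2 * β * (3 / 2) ^ (k + 1)) := by rw [← exp_nat_mul]; ring_nf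

lemma summable_GamSeq_div_gamSeq_succ (hβ : 8 ≤ β) :
    Summable fun k : ℕ => GamSeq β (k + 1) / gamSeq β (k + 1) :=
  Summable.of_nonneg_of_le (fun _ => (div_pos (GamSeq_pos β _) (gamSeq_pos β _)).le)
    (GamSeq_div_gamSeq_succ_le hβ) ((summable_geometric_two).mul_left _)

lemma tsum_GamSeq_div_gamSeq_succ_le (hβ : 8 ≤ β) :
    ∑' k : ℕ, GamSeq β (k + 1) / gamSeq β (k + 1) ≤ 1 / 4 :=
  calc ∑' k : ℕ, GamSeq β (k + 1) / gamSeq β (k + 1) ≤ ∑' k : ℕ, 1 / 8 * (1 / 2 : ℝ) ^ k :=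
        (summable_GamSeq_div_gamSeq_succ hβ).tsum_le_tsum (GamSeq_div_gamSeq_succ_le hβ)
          ((summable_geometric_two).mul_left _)
    _ = 1 / 4 := by rw [tsum_mul_left, tsum_geometric_two]; norm_num

lemma summable_two_zpow_neg_mul_log_sq (hβ : 6 ≤ β) :
    Summable fun k : ℕ =>
      (2 : ℝ) ^ (-(k : ℤ)) * log ((2 * (GamSeq β (k + 1) + gamSeq β (k + 1)) + 1) ^ 2) := by
  refine Summable.of_nonneg_of_le (fun k => ?_) (fun k => ?_)
    ((summable_geometric_of_lt_one (r := 3 / 4) (by norm_num) (by norm_num)).mul_left (9 * β / 2))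
  all_goals
    have hΓ := GamSeq_pos β (k + 1)
    have hγ := gamSeq_pos β (k + 1)
    rw [zpow_neg, zpow_natCast, ← inv_pow]
  · exact mul_nonneg (by positivity) (log_nonneg (by nlinarith))
  · have hθ := gamSeq_le_thetaSeq (β := β) (k := k + 1) (by omega)
    have hsq : (2 * (GamSeq β (k + 1) + gamSeq β (k + 1)) + 1) ^ 2 ≤
        exp (2 * β * (3 / 2) ^ (k + 1 + 1)) :=
      (pow_le_pow_left₀ (by positivity) (by linarith) 2).trans
        (sq_two_mul_thetaSeq_add_GamSeq_add_one_le hβ (by omega))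
    have hlog := (log_le_iff_le_exp (by positivity)).2 hsq
    calc (2⁻¹ : ℝ) ^ k * log ((2 * (GamSeq β (k + 1) + gamSeq β (k + 1)) + 1) ^ 2)
        ≤ 2⁻¹ ^ k * (2 * β * (3 / 2) ^ (k + 1 + 1)) := by gcongr
      _ = 9 * β / 2 * (3 / 4) ^ k := by
          rw [show (3 / 4 : ℝ) = 2⁻¹ * (3 / 2) by norm_num, mul_pow]; ring

lemma summable_sq_two_mul_thetaSeq_add_GamSeq_add_one_mul_exp (hβ : 6 ≤ β) {a : ℝ} (ha : 0 < a) :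
    Summable fun k : ℕ =>
      (2 * (thetaSeq (GamSeq β) (gamSeq β) (k + 1) + GamSeq β (k + 1)) + 1) ^ 2 *
        exp (-a * 2 ^ k) := by
  refine Summable.of_nonneg_of_le (fun k => by positivity) (fun k => ?_)
    (summable_exp_mul_pow_sub_mul_two_pow (p := 3 / 2) (by norm_num) (by norm_num)
      (9 / 2 * β) ha)
  calc (2 * (thetaSeq (GamSeq β) (gamSeq β) (k + 1) + GamSeq β (k + 1)) + 1) ^ 2 *
        exp (-a * 2 ^ k)
      ≤ exp (2 * β * (3 / 2) ^ (k + 1 + 1)) * exp (-a * 2 ^ k) := by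
        gcongr; exact sq_two_mul_thetaSeq_add_GamSeq_add_one_le hβ (by omega)
    _ = exp (9 / 2 * β * (3 / 2) ^ k - a * 2 ^ k) := by rw [← exp_add]; ring_nf

end Scales

/-- Explicit moderately steep scales.  For every `β ≥ 8` the sequences
`Γ_k = e^{(β+1)(3/2)^k}` and `γ_k = (1/8) e^{β(3/2)^{k+1}}`, `k ≥ 1`, are moderately steep
scales: they are strictly increasing and satisfy
(1) `Γ₁ ≥ 2` and `Γ_k < γ_k/2` for `k ≥ 1`;
(2) `Γ_{k+1}/θ_k ≥ 5` for all `k ≥ 1`, where `θ_k = ∑_{h=1}^k (Γ_h + γ_h)`;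
(3) `∑_{k≥1} Γ_k/γ_k ≤ 1/2`;
(4) `a₀ = ∑_{k≥0} 2^{-k} log([2(Γ_{k+1}+γ_{k+1})+1]²) < ∞`;
(5) for every `a > 0`, `∑_{k≥1} [2(θ_k+Γ_k)+1]² e^{-a 2^{k-1}} < ∞`. -/
theorem moderately_steep_scales (β : ℝ) (hβ : 8 ≤ β) :
    (∀ k : ℕ, 1 ≤ k → GamSeq β k < GamSeq β (k + 1)) ∧
    (∀ k : ℕ, 1 ≤ k → gamSeq β k < gamSeq β (k + 1)) ∧
    2 ≤ GamSeq β 1 ∧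
    (∀ k : ℕ, 1 ≤ k → GamSeq β k < gamSeq β k / 2) ∧
    (∀ k : ℕ, 1 ≤ k → 5 ≤ GamSeq β (k + 1) / thetaSeq (GamSeq β) (gamSeq β) k) ∧
    (∃ S : ℝ, HasSum (fun k : ℕ => GamSeq β (k + 1) / gamSeq β (k + 1)) S ∧ S ≤ 1 / 2) ∧
    Summable (fun k : ℕ =>
      (2 : ℝ) ^ (-(k : ℤ)) * Real.log ((2 * (GamSeq β (k + 1) + gamSeq β (k + 1)) + 1) ^ 2)) ∧
    (∀ a : ℝ, 0 < a → Summable (fun k : ℕ =>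
      (2 * (thetaSeq (GamSeq β) (gamSeq β) (k + 1) + GamSeq β (k + 1)) + 1) ^ 2 *
        Real.exp (-a * 2 ^ k))) := by
  have hβ6 : 6 ≤ β := by linarith
  refine ⟨fun k _ => GamSeq_lt_GamSeq_succ (by linarith) k, fun k _ => ?_,
    two_le_GamSeq_one (by linarith), fun k hk => GamSeq_lt_gamSeq_div_two hβ6 hk, fun k hk => ?_,
    ⟨_, (summable_GamSeq_div_gamSeq_succ hβ).hasSum,
      (tsum_GamSeq_div_gamSeq_succ_le hβ).trans (by norm_num)⟩,
    summable_two_zpow_neg_mul_log_sq hβ6,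
    fun a ha => summable_sq_two_mul_thetaSeq_add_GamSeq_add_one_mul_exp hβ6 ha⟩
  · linarith [two_mul_gamSeq_le_gamSeq_succ (by linarith : 1 ≤ β) k, gamSeq_pos β k]
  · have hθ := thetaSeq_le_three_mul_gamSeq hβ6 k
    rw [le_div_iff₀ ((gamSeq_pos β k).trans_le (gamSeq_le_thetaSeq hk))]
    linarith [sixteen_mul_gamSeq_le_GamSeq_succ β k, gamSeq_pos β k]
end

section
/- Stochastic domination by a Bernoulli field. Let Q be a translation-invariant probability measure on Omega = {0,1}^{L^(l)} and let p := ess sup_omega Q(omega_0 = 1 | sigma-algebra generated by (omega_j)_{j different from 0})(omega). Let Q_p be the Bernoulli product measure on Omega with Q_p(omega_x = 1) = p for every x. Then Q is stochastically dominated by Q_p: for every bounded continuous increasing function f : Omega -> R, the expectation of f under Q is at most the expectation of f under Q_p. -/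
open MeasureTheory Real

/-! Multi-scale geometry of the bad region.

The rescaled lattice `L^(l) = (lℤ)²` is identified with `ℤ²` via the bijection
`i ↦ l·i`; under this identification the rescaled distance `d_l` on `L^(l)` becomes the
ℓ¹ distance on `ℤ²`.  Accordingly, sites of `L^(l)` are represented by points of `ℤ²`
and all distances below are measured in units of `l`. -/

/-- Sites of the (rescaled) lattice. -/
abbrev Site : Type := ℤ × ℤ

/-- The ℓ¹ distance on the (rescaled) lattice, i.e. `d_l` in units of `l`. -/
def dist1 (x y : Site) : ℕ := (x.1 - y.1).natAbs + (x.2 - y.2).natAbs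

/-- The space `Ω = {0,1}^{L^(l)}`; `true` encodes `1` (bad), `false` encodes `0` (good). -/
abbrev Omega : Type := Site → Bool

/-- The closed ball `B^(l)_r(x)` of (real) radius `r` around `x`. -/
def ball1 (r : ℝ) (x : Site) : Set Site := {j | (dist1 x j : ℝ) ≤ r}

/-- `g` is a `k`-gentle atom for the bad set `B`: `g = B^(l)_{Γ_k}(x) ∩ B` for some `x ∈ B`,
`diam_l(g) ≤ Γ_k`, and `d_l(g, B \ g) > γ_k`. -/
def kAtom (Γ γ : ℕ → ℝ) (k : ℕ) (B : Set Site) (g : Set Site) : Prop :=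
  (∃ x ∈ B, g = ball1 (Γ k) x ∩ B) ∧
    (∀ x ∈ g, ∀ y ∈ g, (dist1 x y : ℝ) ≤ Γ k) ∧
    ∀ x ∈ g, ∀ y ∈ B \ g, γ k < (dist1 x y : ℝ)

/-- The union of all `k`-gentle atoms of the bad set `B`. -/
def gentleStep (Γ γ : ℕ → ℝ) (k : ℕ) (B : Set Site) : Set Site :=
  {y | ∃ g : Set Site, kAtom Γ γ k B g ∧ y ∈ g}

/-- The `k`-bad sites `BB_k(ω)`:  `BB_0(ω) = {i : ω_i = 1}` and
`BB_k(ω) = BB_{k-1}(ω) \ GG_k(ω)`. -/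
def BB (Γ γ : ℕ → ℝ) (ω : Omega) : ℕ → Set Site
  | 0 => {i | ω i = true}
  | k + 1 => BB Γ γ ω k \ gentleStep Γ γ (k + 1) (BB Γ γ ω k)

/-- The `k`-gentle sites `GG_k(ω)`:  `GG_0(ω) = {i : ω_i = 0}` and, for `k ≥ 1`,
`GG_k(ω)` is the union of the `k`-gentle atoms of `BB_{k-1}(ω)`. -/
def GG (Γ γ : ℕ → ℝ) (ω : Omega) : ℕ → Set Site
  | 0 => {i | ω i = false}
  | k + 1 => gentleStep Γ γ (k + 1) (BB Γ γ ω k)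

/-- The σ-algebra generated by the coordinates `ω_j` with `j ≠ 0`. -/
def extSigma : MeasurableSpace Omega :=
  MeasurableSpace.comap (fun (ω : Omega) (j : {j : Site // j ≠ 0}) => ω j) inferInstance

/-- A version of the conditional probability `Q(ω_0 = 1 | σ(ω_j, j ≠ 0))`. -/
noncomputable def condBadProb (Q : Measure Omega) : Omega → ℝ :=
  Q[Set.indicator {ω : Omega | ω 0 = true} (fun _ => (1 : ℝ)) | extSigma]

/-- The strength of the disorder: `p = ess sup_ω Q(ω_0 = 1 | σ(ω_j, j ≠ 0))(ω)`. -/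
noncomputable def badParam (Q : Measure Omega) : ℝ := essSup (condBadProb Q) Q

/-- Invariance of `Q` under all lattice translations of `L^(l)`. -/
def TransInvariant (Q : Measure Omega) : Prop :=
  ∀ v : Site, Measure.map (fun (ω : Omega) (x : Site) => ω (x + v)) Q = Q

/-- `a₀ := ∑_{k≥0} 2^{-k} log([2(Γ_{k+1}+γ_{k+1})+1]²)`. -/
noncomputable def aZero (Γ γ : ℕ → ℝ) : ℝ :=
  ∑' k : ℕ, (2 : ℝ) ^ (-(k : ℤ)) * Real.log ((2 * (Γ (k + 1) + γ (k + 1)) + 1) ^ 2)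

/-- `Qp` is the Bernoulli product measure on `Ω` with parameter `p`, characterized by its
cylinder probabilities. -/
def IsBernoulliProduct (p : ℝ) (Qp : Measure Omega) : Prop :=
  ∀ (S : Finset Site) (a : Site → Bool),
    Qp {ω : Omega | ∀ j ∈ S, ω j = a j} =
      ∏ j ∈ S, ENNReal.ofReal (if a j then p else 1 - p)

/-!
Local increasing functions are handled by induction on the finite set of sites they depend on.
For a site `x` write `f = F₀ + (F₁ - F₀) · 1{ω_x = 1}`, where `F_b` is `f` with `ω_x` set to `b`.
The increment `F₁ - F₀` is nonnegative and does not depend on `ω_x`, so translating `x` to the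
origin and conditioning on the other sites gives `∫ (F₁ - F₀) 1{ω_x = 1} dQ ≤ p ∫ (F₁ - F₀) dQ`,
with equality for the product measure `Q_p`. Hence `∫ f dQ ≤ ∫ g dQ` and `∫ g dQ_p = ∫ f dQ_p`
for the increasing function `g = (1 - p) F₀ + p F₁`, which depends on one site fewer.
A continuous increasing `f` is the limit of the local increasing functions `f(ω on Λ, 0 off Λ)`,
which lie below `f`; dominated convergence passes the inequality to the limit.
-/

open Filter Function Topology

section LocalFunctions

variable {ι β : Type*} {s : Finset ι}

lemma DependsOn.exists_eq_comp_restrict {γ : Type*} [Nonempty γ] {f : (ι → β) → γ}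
    (hf : DependsOn f s) : ∃ g : (s → β) → γ, f = g ∘ s.restrict :=
  dependsOn_iff_exists_comp.1 hf

variable [MeasurableSpace β] [MeasurableSingletonClass β] [Finite β]

lemma DependsOn.measurable_cylinderEvents {γ : Type*} [MeasurableSpace γ] [Nonempty γ]
    {f : (ι → β) → γ} {Δ : Set ι} (hsΔ : (s : Set ι) ⊆ Δ) (hf : DependsOn f s) :
    Measurable[cylinderEvents Δ] f := by
  obtain ⟨g, rfl⟩ := hf.exists_eq_comp_restrict
  exact (measurable_of_countable g).comp
    ((Set.measurable_restrict₂ hsΔ).comp (measurable_restrict_cylinderEvents Δ))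

lemma DependsOn.measurable {γ : Type*} [MeasurableSpace γ] [Nonempty γ] {f : (ι → β) → γ}
    (hf : DependsOn f s) : Measurable f := by
  have := hf.measurable_cylinderEvents (Set.subset_univ _)
  rwa [cylinderEvents_univ] at this

variable {E : Type*} [NormedAddCommGroup E] {μ ν : Measure (ι → β)}

lemma DependsOn.integrable [IsFiniteMeasure μ] {f : (ι → β) → E} (hf : DependsOn f s) :
    Integrable f μ := by
  obtain ⟨g, rfl⟩ := hf.exists_eq_comp_restrict
  exact Integrable.of_finite.comp_measurable (Finset.measurable_restrict s)

lemma DependsOn.integral_eq_of_map_restrict_eq [NormedSpace ℝ E] {f : (ι → β) → E}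
    (hf : DependsOn f s) (hμν : μ.map s.restrict = ν.map s.restrict) :
    ∫ ω, f ω ∂μ = ∫ ω, f ω ∂ν := by
  obtain ⟨g, rfl⟩ := hf.exists_eq_comp_restrict
  have hg : AEStronglyMeasurable g (ν.map s.restrict) :=
    StronglyMeasurable.of_discrete.aestronglyMeasurable
  rw [comp_def, ← integral_map (Finset.measurable_restrict s).aemeasurable (hμν ▸ hg),
    ← integral_map (Finset.measurable_restrict s).aemeasurable hg, hμν]

end LocalFunctions

section Resampling

variable {ι : Type*}

lemma measurableSet_coord_eq (x : ι) (b : Bool) : MeasurableSet {ω : ι → Bool | ω x = b} :=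
  measurableSet_eq_fun (measurable_pi_apply x) measurable_const

variable [DecidableEq ι] {s : Finset ι}

lemma monotone_update_left {β : Type*} [Preorder β] (x : ι) (b : β) :
    Monotone fun ω : ι → β => update ω x b :=
  fun _ _ h => update_le_update_iff.2 ⟨le_rfl, fun j _ => h j⟩

def averageCoord (p : ℝ) (x : ι) (f : (ι → Bool) → ℝ) (ω : ι → Bool) : ℝ :=
  (1 - p) * f (update ω x false) + p * f (update ω x true)

variable {p : ℝ} {x : ι} {f : (ι → Bool) → ℝ}

lemma DependsOn.averageCoord (hf : DependsOn f s) : DependsOn (averageCoord p x f) (s.erase x) := by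
  intro ω ω' h
  simp only [_root_.averageCoord, hf.update x false h, hf.update x true h]

lemma Monotone.averageCoord (hp₀ : 0 ≤ p) (hp₁ : p ≤ 1) (hf : Monotone f) :
    Monotone (averageCoord p x f) := fun _ _ h =>
  add_le_add (mul_le_mul_of_nonneg_left (hf (monotone_update_left x false h)) (by linarith))
    (mul_le_mul_of_nonneg_left (hf (monotone_update_left x true h)) hp₀)

variable {μ : Measure (ι → Bool)} [IsFiniteMeasure μ]

lemma integral_eq_integral_update_add_setIntegral (hf : DependsOn f s) :
    ∫ ω, f ω ∂μ = ∫ ω, f (update ω x false) ∂μ +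
      ∫ ω in {ω | ω x = true}, (f (update ω x true) - f (update ω x false)) ∂μ := by
  set A := {ω : ι → Bool | ω x = true}
  have hA : MeasurableSet A := measurableSet_coord_eq x true
  have hint (b : Bool) : Integrable (fun ω => f (update ω x b)) μ := (hf.update x b).integrable
  have hfA : ∫ ω in A, f ω ∂μ = ∫ ω in A, f (update ω x true) ∂μ :=
    setIntegral_congr_fun hA fun ω (hω : ω x = true) => by rw [← hω, update_eq_self]
  have hfAc : ∫ ω in Aᶜ, f ω ∂μ = ∫ ω in Aᶜ, f (update ω x false) ∂μ :=
    setIntegral_congr_fun hA.compl fun ω (hω : ¬ω x = true) => by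
      rw [← Bool.eq_false_iff.2 hω, update_eq_self]
  rw [← integral_add_compl hA hf.integrable, hfA, hfAc,
    ← integral_add_compl hA (hint false),
    integral_sub (hint true).integrableOn (hint false).integrableOn]
  ring

lemma integral_averageCoord (hf : DependsOn f s) :
    ∫ ω, averageCoord p x f ω ∂μ = ∫ ω, f (update ω x false) ∂μ +
      p * ∫ ω, (f (update ω x true) - f (update ω x false)) ∂μ := by
  have hint (b : Bool) : Integrable (fun ω => f (update ω x b)) μ := (hf.update x b).integrable
  simp only [averageCoord]
  rw [integral_add ((hint false).const_mul _) ((hint true).const_mul _), integral_const_mul,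
    integral_const_mul, integral_sub (hint true) (hint false)]
  ring

end Resampling

section CondExp

variable {α : Type*} {m m₀ : MeasurableSpace α} {μ : Measure α} [IsFiniteMeasure μ]

lemma setIntegral_le_essSup_condExp_mul_integral (hm : m ≤ m₀) {A : Set α}
    (hA : MeasurableSet A) {h : α → ℝ} (hh : StronglyMeasurable[m] h) (hint : Integrable h μ)
    (h₀ : 0 ≤ h) :
    ∫ ω in A, h ω ∂μ ≤ essSup (μ[A.indicator fun _ => (1 : ℝ)|m]) μ * ∫ ω, h ω ∂μ := by
  set c := μ[A.indicator fun _ => (1 : ℝ)|m]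
  have hind : Integrable (A.indicator fun _ => (1 : ℝ)) μ := (integrable_const 1).indicator hA
  have hmul : h * A.indicator (fun _ => 1) = A.indicator h := by
    ext ω; by_cases hω : ω ∈ A <;> simp [hω]
  have hc₀ : 0 ≤ᵐ[μ] c := condExp_nonneg (ae_of_all _ (Set.indicator_nonneg fun _ _ => zero_le_one))
  have hc₁ : c ≤ᵐ[μ] fun _ => 1 := by
    have := condExp_mono (m := m) hind (integrable_const (1 : ℝ))
      (ae_of_all _ (Set.indicator_le_self' fun _ _ => zero_le_one))
    rwa [condExp_const hm] at this
  have hc : ∀ᵐ ω ∂μ, c ω ≤ essSup c μ := ae_le_essSup ⟨1, eventually_map.2 hc₁⟩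
  calc ∫ ω in A, h ω ∂μ = ∫ ω, μ[h * A.indicator fun _ => 1|m] ω ∂μ := by
        rw [integral_condExp hm, hmul, integral_indicator hA]
    _ = ∫ ω, h ω * c ω ∂μ :=
        integral_congr_ae <|
          condExp_mul_of_stronglyMeasurable_left hh (hmul ▸ hint.indicator hA) hind
    _ ≤ ∫ ω, h ω * essSup c μ ∂μ := by
        refine integral_mono_of_nonneg ?_ (hint.mul_const _) ?_
        · filter_upwards [hc₀] with ω hω using mul_nonneg (h₀ ω) hω
        · filter_upwards [hc] with ω hω using mul_le_mul_of_nonneg_left hω (h₀ ω)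
    _ = essSup c μ * ∫ ω, h ω ∂μ := by rw [integral_mul_const, mul_comm]

end CondExp

section Disorder

variable {Q : Measure Omega}

lemma extSigma_le : extSigma ≤ MeasurableSpace.pi :=
  (measurable_pi_lambda _ fun _ => measurable_pi_apply _).comap_le

lemma cylinderEvents_compl_zero_le_extSigma :
    cylinderEvents ({0}ᶜ : Set Site) ≤ (extSigma : MeasurableSpace Omega) := by
  have hproj : Measurable[extSigma] fun (ω : Omega) (j : {j : Site // j ≠ 0}) => ω j :=
    Measurable.of_comap_le le_rfl
  have hid : Measurable[extSigma, cylinderEvents {0}ᶜ] (id : Omega → Omega) :=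
    measurable_cylinderEvents_iff.2 fun j hj =>
      (measurable_pi_apply (⟨j, hj⟩ : {j : Site // j ≠ 0})).comp hproj
  simpa using hid.comap_le

lemma setIntegral_coord_zero_le_badParam [IsFiniteMeasure Q] {s : Finset Site}
    (hs : (0 : Site) ∉ s) {h : Omega → ℝ} (hh : DependsOn h s) (h₀ : 0 ≤ h) :
    ∫ ω in {ω | ω 0 = true}, h ω ∂Q ≤ badParam Q * ∫ ω, h ω ∂Q := by
  have hmeas : Measurable[extSigma] h := (hh.measurable_cylinderEvents (Δ := {0}ᶜ)
    (by simpa using hs)).mono cylinderEvents_compl_zero_le_extSigma le_rfl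
  exact setIntegral_le_essSup_condExp_mul_integral extSigma_le (measurableSet_coord_eq 0 true)
    hmeas.stronglyMeasurable hh.integrable h₀

lemma TransInvariant.integral_comp_shift (hinv : TransInvariant Q) (v : Site) {f : Omega → ℝ}
    (hf : AEStronglyMeasurable f Q) : ∫ ω, f (fun x => ω (x + v)) ∂Q = ∫ ω, f ω ∂Q := by
  have hshift : Measurable fun (ω : Omega) (x : Site) => ω (x + v) :=
    measurable_pi_lambda _ fun x => measurable_pi_apply _
  rw [← integral_map hshift.aemeasurable (by rwa [hinv v]), hinv v]

lemma TransInvariant.setIntegral_coord_le_badParam [IsFiniteMeasure Q]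
    (hinv : TransInvariant Q) {s : Finset Site} {x : Site} (hx : x ∉ s) {h : Omega → ℝ}
    (hh : DependsOn h s) (h₀ : 0 ≤ h) :
    ∫ ω in {ω | ω x = true}, h ω ∂Q ≤ badParam Q * ∫ ω, h ω ∂Q := by
  set h' : Omega → ℝ := fun ω => h fun z => ω (z - x)
  have hh' : DependsOn h' (s.image (· - x)) := fun ω ω' hω =>
    hh fun z hz => hω _ (Finset.mem_coe.2 (Finset.mem_image_of_mem _ hz))
  have h0 : (0 : Site) ∉ s.image (· - x) := by simpa [sub_eq_zero] using hx
  have hshift (ω : Omega) : h' (fun z => ω (z + x)) = h ω := by simp [h']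
  have hind : {ω : Omega | ω x = true}.indicator h =
      fun ω => {ω : Omega | ω 0 = true}.indicator h' fun z => ω (z + x) := by
    ext ω; simp [Set.indicator_apply, hshift]
  have hmeas : Measurable ({ω : Omega | ω 0 = true}.indicator h') :=
    hh'.measurable.indicator (measurableSet_coord_eq 0 true)
  rw [← integral_indicator (measurableSet_coord_eq x true), hind,
    hinv.integral_comp_shift x hmeas.aestronglyMeasurable,
    integral_indicator (measurableSet_coord_eq 0 true)]
  have hint : ∫ ω, h' ω ∂Q = ∫ ω, h ω ∂Q := by
    simp only [← hshift, hinv.integral_comp_shift x hh'.measurable.aestronglyMeasurable]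
  exact hint ▸ setIntegral_coord_zero_le_badParam h0 hh' fun ω => h₀ fun z => ω (z - x)

end Disorder

section Bernoulli

variable {p : ℝ} {Qp : Measure Omega}

lemma IsBernoulliProduct.isProbabilityMeasure (hQp : IsBernoulliProduct p Qp) :
    IsProbabilityMeasure Qp :=
  ⟨by simpa using hQp ∅ fun _ => true⟩

lemma IsBernoulliProduct.measure_coord_eq (hQp : IsBernoulliProduct p Qp) (x : Site) (b : Bool) :
    Qp {ω | ω x = b} = ENNReal.ofReal (if b then p else 1 - p) := by
  simpa using hQp {x} fun _ => b

lemma IsBernoulliProduct.le_one (hQp : IsBernoulliProduct p Qp) : p ≤ 1 := by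
  have := hQp.isProbabilityMeasure
  simpa [hQp.measure_coord_eq 0 true] using prob_le_one (μ := Qp) (s := {ω | ω 0 = true})

lemma IsBernoulliProduct.nonneg (hQp : IsBernoulliProduct p Qp) : 0 ≤ p := by
  have := hQp.isProbabilityMeasure
  simpa [hQp.measure_coord_eq 0 false] using prob_le_one (μ := Qp) (s := {ω | ω 0 = false})

lemma IsBernoulliProduct.map_restrict_restrict_coord_true (hQp : IsBernoulliProduct p Qp)
    {s : Finset Site} {x : Site} (hx : x ∉ s) :
    (Qp.restrict {ω | ω x = true}).map s.restrict = (ENNReal.ofReal p • Qp).map s.restrict := by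
  refine Measure.ext_of_singleton fun b => ?_
  -- `a` extends `b` by `true` at `x`, so that both events are cylinders of `a`.
  set a : Omega := fun j => if hj : j ∈ s then b ⟨j, hj⟩ else true
  have hcyl : s.restrict ⁻¹' ({b} : Set (s → Bool)) = {ω : Omega | ∀ j ∈ s, ω j = a j} := by
    ext ω
    simp only [Set.mem_preimage, Set.mem_singleton_iff, funext_iff, Subtype.forall,
      Finset.restrict]
    exact forall₂_congr fun j hj => by simp only [a, dif_pos hj]
  have hcyl_x : s.restrict ⁻¹' ({b} : Set (s → Bool)) ∩ {ω : Omega | ω x = true} =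
      {ω : Omega | ∀ j ∈ insert x s, ω j = a j} := by
    rw [hcyl]; ext ω
    simp [a, hx, and_comm]
  have hmeas := Finset.measurable_restrict (X := fun _ : Site => Bool) s (measurableSet_singleton b)
  rw [Measure.map_apply (Finset.measurable_restrict s) (measurableSet_singleton b),
    Measure.map_apply (Finset.measurable_restrict s) (measurableSet_singleton b),
    Measure.restrict_apply hmeas, Measure.smul_apply, smul_eq_mul, hcyl_x, hcyl, hQp, hQp,
    Finset.prod_insert hx]
  simp [a, hx]

lemma IsBernoulliProduct.setIntegral_coord_true (hQp : IsBernoulliProduct p Qp)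
    {s : Finset Site} {x : Site} (hx : x ∉ s) {h : Omega → ℝ} (hh : DependsOn h s) :
    ∫ ω in {ω | ω x = true}, h ω ∂Qp = p * ∫ ω, h ω ∂Qp := by
  rw [hh.integral_eq_of_map_restrict_eq (hQp.map_restrict_restrict_coord_true hx),
    integral_smul_measure, ENNReal.toReal_ofReal hQp.nonneg, smul_eq_mul]

end Bernoulli

lemma integral_le_integral_of_dependsOn {Q Qp : Measure Omega} [IsProbabilityMeasure Q]
    (hinv : TransInvariant Q) (hQp : IsBernoulliProduct (badParam Q) Qp) (s : Finset Site) :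
    ∀ f : Omega → ℝ, DependsOn f s → Monotone f → ∫ ω, f ω ∂Q ≤ ∫ ω, f ω ∂Qp := by
  have := hQp.isProbabilityMeasure
  induction s using Finset.induction_on with
  | empty =>
    intro f hf _
    have hconst : f = fun _ => f ⊥ := funext fun ω => hf (by simp)
    rw [hconst]
    simp
  | insert x s hx ih =>
    intro f hf hmono
    set p := badParam Q
    have hF (b : Bool) : DependsOn (fun ω => f (update ω x b)) s := by
      simpa [Finset.erase_insert hx] using hf.update x b
    set h : Omega → ℝ := fun ω => f (update ω x true) - f (update ω x false)
    have hh : DependsOn h s := fun ω ω' hω => by simp only [h, hF true hω, hF false hω]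
    have h₀ : 0 ≤ h := fun ω => sub_nonneg.2 (hmono (update_le_update_iff'.2 (Bool.false_le _)))
    have havg : DependsOn (averageCoord p x f) s := by
      simpa [Finset.erase_insert hx] using hf.averageCoord (p := p) (x := x)
    calc ∫ ω, f ω ∂Q = ∫ ω, f (update ω x false) ∂Q + ∫ ω in {ω | ω x = true}, h ω ∂Q :=
          integral_eq_integral_update_add_setIntegral hf
      _ ≤ ∫ ω, f (update ω x false) ∂Q + p * ∫ ω, h ω ∂Q := by
          gcongr; exact hinv.setIntegral_coord_le_badParam hx hh h₀
      _ = ∫ ω, averageCoord p x f ω ∂Q := (integral_averageCoord hf).symm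
      _ ≤ ∫ ω, averageCoord p x f ω ∂Qp := ih _ havg (hmono.averageCoord hQp.nonneg hQp.le_one)
      _ = ∫ ω, f (update ω x false) ∂Qp + p * ∫ ω, h ω ∂Qp := integral_averageCoord hf
      _ = ∫ ω, f ω ∂Qp := by
          rw [integral_eq_integral_update_add_setIntegral (x := x) hf, hQp.setIntegral_coord_true hx hh]

lemma integral_le_integral_of_forall_dependsOn {ι : Type*} [Countable ι]
    {μ ν : Measure (ι → Bool)} [IsFiniteMeasure μ] [IsFiniteMeasure ν]
    (hloc : ∀ (s : Finset ι) (f : (ι → Bool) → ℝ), DependsOn f s → Monotone f →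
      ∫ ω, f ω ∂μ ≤ ∫ ω, f ω ∂ν)
    {f : (ι → Bool) → ℝ} (hcont : Continuous f) (hmono : Monotone f) :
    ∫ ω, f ω ∂μ ≤ ∫ ω, f ω ∂ν := by
  classical
  obtain ⟨M, hM⟩ := (isCompact_range hcont).isBounded.exists_norm_le
  have hfM (ω) : ‖f ω‖ ≤ M := hM _ ⟨ω, rfl⟩
  set trunc : Finset ι → (ι → Bool) → ι → Bool := fun s ω => s.piecewise ω ⊥
  have htrunc_le (s ω) : trunc s ω ≤ ω := fun i => by
    by_cases hi : i ∈ s <;> simp [trunc, hi]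
  have htrunc_mono (s) : Monotone (trunc s) := fun ω ω' h i => by
    by_cases hi : i ∈ s <;> simp [trunc, hi, h i]
  have hdep (s) : DependsOn (fun ω => f (trunc s ω)) s := fun ω ω' h =>
    congrArg f (s.piecewise_congr h fun _ _ => rfl)
  have htrunc_tendsto (ω) : Tendsto (fun s => trunc s ω) atTop (𝓝 ω) :=
    tendsto_pi_nhds.2 fun i => tendsto_const_nhds.congr' <|
      (eventually_ge_atTop {i}).mono fun s hs => by simp [trunc, Finset.singleton_subset_iff.1 hs]
  have hlim : Tendsto (fun s => ∫ ω, f (trunc s ω) ∂μ) atTop (𝓝 (∫ ω, f ω ∂μ)) :=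
    tendsto_integral_filter_of_dominated_convergence (fun _ => M)
      (.of_forall fun s => (hdep s).measurable.aestronglyMeasurable)
      (.of_forall fun s => ae_of_all _ fun ω => hfM _) (integrable_const M)
      (ae_of_all _ fun ω => (hcont.tendsto ω).comp (htrunc_tendsto ω))
  have hfint : Integrable f ν :=
    .of_bound hcont.measurable.aestronglyMeasurable M (ae_of_all _ hfM)
  refine le_of_tendsto' hlim fun s => ?_
  calc ∫ ω, f (trunc s ω) ∂μ ≤ ∫ ω, f (trunc s ω) ∂ν :=
        hloc s _ (hdep s) (hmono.comp (htrunc_mono s))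
    _ ≤ ∫ ω, f ω ∂ν := integral_mono (hdep s).integrable hfint fun ω => hmono (htrunc_le s ω)

theorem stochastic_domination_general (Q Qp : Measure Omega) [IsProbabilityMeasure Q]
    (hinv : TransInvariant Q) (hQp : IsBernoulliProduct (badParam Q) Qp)
    (f : Omega → ℝ) (hcont : Continuous f) (hmono : Monotone f) :
    ∫ ω, f ω ∂Q ≤ ∫ ω, f ω ∂Qp := by
  have := hQp.isProbabilityMeasure
  exact integral_le_integral_of_forall_dependsOn (integral_le_integral_of_dependsOn hinv hQp)
    hcont hmono

/-- Stochastic domination by a Bernoulli field.  If `Q` is a translation-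
invariant probability measure on `Ω` with badness parameter `p`, and `Q_p` is the
Bernoulli product measure with `Q_p(ω_x = 1) = p`, then `Q ≤ Q_p` stochastically: for
every bounded continuous increasing `f : Ω → ℝ`, `∫ f dQ ≤ ∫ f dQ_p`. -/
theorem stochastic_domination (Q Qp : Measure Omega)
    [IsProbabilityMeasure Q] [IsProbabilityMeasure Qp]
    (hinv : TransInvariant Q) (hQp : IsBernoulliProduct (badParam Q) Qp)
    (f : Omega → ℝ) (hcont : Continuous f) (hbdd : ∃ M : ℝ, ∀ ω, |f ω| ≤ M)
    (hmono : Monotone f) :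
    ∫ ω, f ω ∂Q ≤ ∫ ω, f ω ∂Qp :=
  stochastic_domination_general Q Qp hinv hQp f hcont hmono
end
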